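/- Let b_n be the sum of the total number of ancestral configurations c(t) over all ordered binary trees t with n leaves, and a_n the corresponding sum of root configurations c_r(t). Then b_1 = 0 and for n ≥ 2, b_n = 2 * sum_{j=1}^{n-1} b_j C_{n-1-j} + a_n. Equivalently, the generating functions T(z) = sum b_n z^n and R(z) = sum a_n z^n satisfy T(z) = 2 z C(z) T(z) + R(z) as formal power series. -/

import Mathlib

inductive BTree where
  | leaf : BTree
  | node : BTree → BTree → BTree

def BTree.nLeaves : BTree → ℕ
  | .leaf => 1
  | .node l r => l.nLeaves + r.nLeaves

/-- Number of root ancestral configurations. -/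
def BTree.cr : BTree → ℕ
  | .leaf => 0
  | .node l r => (l.cr + 1) * (r.cr + 1)

/-- Total number of ancestral configurations. -/
def BTree.ctot : BTree → ℕ
  | .leaf => 0
  | .node l r => l.ctot + r.ctot + (BTree.node l r).cr

/-- The m-th Catalan number C_m = binomial(2m, m)/(m+1). -/
def catalanNum (m : ℕ) : ℕ := (2 * m).choose m / (m + 1)

/-- a_n: the sum of the root configuration counts over all ordered binary trees
with n leaves. -/
noncomputable def a (n : ℕ) : ℕ := ∑ᶠ t : {t : BTree // t.nLeaves = n}, (t : BTree).cr

/-- b_n: the sum of the total configuration counts over all ordered binary trees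
with n leaves. -/
noncomputable def b (n : ℕ) : ℕ := ∑ᶠ t : {t : BTree // t.nLeaves = n}, (t : BTree).ctot

noncomputable def Rser : PowerSeries ℕ := PowerSeries.mk a
noncomputable def Tser : PowerSeries ℕ := PowerSeries.mk b
noncomputable def Cser : PowerSeries ℕ := PowerSeries.mk catalanNum

/-!
Cutting a tree with `n` leaves at its root into subtrees with `i` and `j` leaves, `i + j = n`,
gives `b n = ∑_{i+j=n} (b i * w j + w i * b j) + a n`, where `w j` is the number of trees with
`j` leaves; the two halves agree after swapping `i` and `j`. Since `w 0 = 0` and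
`w (m + 1) = catalan m`, we have `∑ w j z^j = z C(z)`, so this is the coefficientwise form of
`T = 2 z C T + R`; the explicit recurrence is the same convolution re-indexed, using `b 0 = 0`.
-/

open Finset BinaryTree

namespace BTree

def toBinaryTree : BTree → BinaryTree Unit
  | leaf => .nil
  | node l r => .node () l.toBinaryTree r.toBinaryTree

def ofBinaryTree : BinaryTree Unit → BTree
  | .nil => leaf
  | .node _ l r => node (ofBinaryTree l) (ofBinaryTree r)

def equivBinaryTree : BTree ≃ BinaryTree Unit where
  toFun := toBinaryTree
  invFun := ofBinaryTree
  left_inv t := by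
    induction t with
    | leaf => rfl
    | node l r ihl ihr => simp only [toBinaryTree, ofBinaryTree, ihl, ihr]
  right_inv u := by
    induction u with
    | nil => rfl
    | node _ l r ihl ihr => simp only [toBinaryTree, ofBinaryTree, ihl, ihr]

theorem nLeaves_eq_numLeaves (t : BTree) : t.nLeaves = (equivBinaryTree t).numLeaves := by
  induction t with
  | leaf => rfl
  | node l r ihl ihr => simp only [nLeaves, ihl, ihr]; rfl

def withLeaves : ℕ → Finset BTree
  | 0 => ∅
  | m + 1 => (treesOfNumNodesEq m).map equivBinaryTree.symm.toEmbedding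

@[simp]
theorem mem_withLeaves {t : BTree} {n : ℕ} : t ∈ withLeaves n ↔ t.nLeaves = n := by
  rw [nLeaves_eq_numLeaves, numLeaves_eq_numNodes_succ]
  cases n <;> simp [withLeaves]

theorem card_withLeaves_succ (m : ℕ) : #(withLeaves (m + 1)) = catalan m := by
  rw [withLeaves, card_map, treesOfNumNodesEq_card_eq_catalan]

theorem withLeaves_one : withLeaves 1 = {leaf} := by
  rw [withLeaves, treesOfNumNodesEq_zero, map_singleton]
  rfl

theorem sum_withLeaves_eq_sum_antidiagonal {M : Type*} [AddCommMonoid M] (f : BTree → M)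
    (hf : f leaf = 0) (n : ℕ) :
    ∑ t ∈ withLeaves n, f t =
      ∑ p ∈ antidiagonal n, ∑ l ∈ withLeaves p.1, ∑ r ∈ withLeaves p.2, f (node l r) := by
  rw [sum_congr rfl fun p _ => (sum_product _ _ fun x => f (node x.1 x.2)).symm,
    ← sum_sigma (antidiagonal n) (fun p => withLeaves p.1 ×ˢ withLeaves p.2)
      fun x => f (node x.2.1 x.2.2)]
  symm
  refine sum_bij_ne_zero (fun x _ _ => node x.2.1 x.2.2) ?_ ?_ ?_ fun _ _ _ => rfl
  · rintro ⟨p, l, r⟩ h -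
    simp only [mem_sigma, HasAntidiagonal.mem_antidiagonal, mem_product, mem_withLeaves] at h ⊢
    simp only [nLeaves, h]
  · rintro ⟨p, l, r⟩ h - ⟨p', l', r'⟩ h' - heq
    simp only [mem_sigma, mem_product, mem_withLeaves, node.injEq] at h h' heq
    obtain ⟨rfl, rfl⟩ := heq
    obtain rfl : p = p' := Prod.ext (h.2.1.symm.trans h'.2.1) (h.2.2.symm.trans h'.2.2)
    rfl
  · rintro (_ | ⟨l, r⟩) ht hft
    · exact absurd hf hft
    · refine ⟨⟨(l.nLeaves, r.nLeaves), l, r⟩, ?_, hft, rfl⟩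
      simpa [nLeaves] using ht

end BTree

theorem finsum_nLeaves_eq_sum {M : Type*} [AddCommMonoid M] (f : BTree → M) (n : ℕ) :
    ∑ᶠ t : {t : BTree // t.nLeaves = n}, f t = ∑ t ∈ BTree.withLeaves n, f t := by
  have hs : {t : BTree | t.nLeaves = n} = BTree.withLeaves n := by ext; simp
  rw [← finsum_mem_coe_finset, ← hs, ← finsum_set_coe_eq_finsum_mem]
  rfl

theorem catalanNum_eq_catalan (m : ℕ) : catalanNum m = catalan m :=
  (catalan_eq_centralBinom_div m).symm

theorem a_eq_sum (n : ℕ) : a n = ∑ t ∈ BTree.withLeaves n, t.cr :=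
  finsum_nLeaves_eq_sum _ n

theorem b_eq_sum (n : ℕ) : b n = ∑ t ∈ BTree.withLeaves n, t.ctot :=
  finsum_nLeaves_eq_sum _ n

theorem b_zero : b 0 = 0 := by
  rw [b_eq_sum]
  rfl

theorem b_one : b 1 = 0 := by
  rw [b_eq_sum, BTree.withLeaves_one, sum_singleton]
  rfl

theorem b_eq_two_mul_sum_add_a (n : ℕ) :
    b n = 2 * ∑ p ∈ antidiagonal n, #(BTree.withLeaves p.1) * b p.2 + a n := by
  have hsplit : ∀ p ∈ antidiagonal n,
      ∑ l ∈ BTree.withLeaves p.1, ∑ r ∈ BTree.withLeaves p.2, (BTree.node l r).ctot =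
        b p.1 * #(BTree.withLeaves p.2) + #(BTree.withLeaves p.1) * b p.2 +
          ∑ l ∈ BTree.withLeaves p.1, ∑ r ∈ BTree.withLeaves p.2, (BTree.node l r).cr := by
    intro p _
    simp only [BTree.ctot, sum_add_distrib, sum_const, smul_eq_mul, ← mul_sum, b_eq_sum]
    ring
  rw [b_eq_sum, BTree.sum_withLeaves_eq_sum_antidiagonal _ rfl, sum_congr rfl hsplit,
    sum_add_distrib, sum_add_distrib, a_eq_sum, BTree.sum_withLeaves_eq_sum_antidiagonal _ rfl,
    ← Nat.sum_antidiagonal_swap]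
  simp only [Prod.fst_swap, Prod.snd_swap, mul_comm (b _)]
  ring

theorem sum_antidiagonal_card_withLeaves_mul {g : ℕ → ℕ} (hg : g 0 = 0) (n : ℕ) :
    ∑ p ∈ antidiagonal n, #(BTree.withLeaves p.1) * g p.2 =
      ∑ j ∈ Icc 1 (n - 1), g j * catalan (n - 1 - j) := by
  calc ∑ p ∈ antidiagonal n, #(BTree.withLeaves p.1) * g p.2
      = ∑ j ∈ range (n + 1), g j * #(BTree.withLeaves (n - j)) := by
        rw [← Nat.sum_antidiagonal_swap]
        simp only [Prod.fst_swap, Prod.snd_swap]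
        rw [Nat.sum_antidiagonal_eq_sum_range_succ fun i j => #(BTree.withLeaves j) * g i]
        simp only [mul_comm]
    _ = ∑ j ∈ Icc 1 (n - 1), g j * #(BTree.withLeaves (n - j)) := by
        refine (sum_subset (fun j hj => ?_) fun j hj hj' => ?_).symm
        · simp only [mem_Icc, mem_range] at hj ⊢
          omega
        · obtain rfl | rfl : j = 0 ∨ j = n := by
            simp only [mem_Icc, mem_range] at hj hj'
            omega
          · rw [hg, zero_mul]
          · rw [Nat.sub_self]
            rfl
    _ = ∑ j ∈ Icc 1 (n - 1), g j * catalan (n - 1 - j) := by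
        refine sum_congr rfl fun j hj => ?_
        rw [show n - j = n - 1 - j + 1 by simp only [mem_Icc] at hj; omega,
          BTree.card_withLeaves_succ]

open PowerSeries in
theorem X_mul_Cser : X * Cser = PowerSeries.mk fun n => #(BTree.withLeaves n) := by
  ext (_ | n)
  · simp [BTree.withLeaves]
  · simp [coeff_succ_X_mul, Cser, catalanNum_eq_catalan, BTree.card_withLeaves_succ]

open PowerSeries in
theorem total_config_recurrence :
    b 1 = 0 ∧
    (∀ n : ℕ, 2 ≤ n → b n =
      2 * (∑ j ∈ Finset.Icc 1 (n - 1), b j * catalanNum (n - 1 - j)) + a n) ∧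
    Tser = 2 * X * Cser * Tser + Rser := by
  refine ⟨b_one, fun n _ => ?_, ?_⟩
  · simpa only [catalanNum_eq_catalan, sum_antidiagonal_card_withLeaves_mul b_zero]
      using b_eq_two_mul_sum_add_a n
  · ext n
    rw [mul_assoc 2 X, X_mul_Cser, mul_assoc, two_mul, map_add, map_add, coeff_mul, Tser, Rser,
      coeff_mk, coeff_mk, b_eq_two_mul_sum_add_a]
    simp only [coeff_mk]
    ring
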